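/- arXiv:2512.07071 — 5 statements merged into one kernel-verified Lean document; each statement's English description precedes it below -/
import Mathlib

section
/- For γ > 1 and k₀ > 0, one has 2ω(k₀) + ω(2k₀) ≠ 0 and 2ω(k₀) − ω(2k₀) ≠ 0, where ω(k) = k·√(γ + 1/(1+k²)). -/
/-- For `γ > 1` and `k₀ > 0`, one has `2ω(k₀) + ω(2k₀) ≠ 0` and
`2ω(k₀) − ω(2k₀) ≠ 0`, where `ω(k) = k·√(γ + 1/(1+k²))`. -/
theorem stmt1 (γ k₀ : ℝ) (hγ : 1 < γ) (hk₀ : 0 < k₀) :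
    2 * (k₀ * Real.sqrt (γ + 1 / (1 + k₀ ^ 2))) +
        (2 * k₀) * Real.sqrt (γ + 1 / (1 + (2 * k₀) ^ 2)) ≠ 0 ∧
    2 * (k₀ * Real.sqrt (γ + 1 / (1 + k₀ ^ 2))) -
        (2 * k₀) * Real.sqrt (γ + 1 / (1 + (2 * k₀) ^ 2)) ≠ 0 := by
  have h1 : (0:ℝ) < γ + 1 / (1 + k₀ ^ 2) := by positivity
  have h2 : (0:ℝ) < γ + 1 / (1 + (2 * k₀) ^ 2) := by positivity
  have hs1 : 0 < Real.sqrt (γ + 1 / (1 + k₀ ^ 2)) := Real.sqrt_pos.mpr h1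
  have hs2 : 0 < Real.sqrt (γ + 1 / (1 + (2 * k₀) ^ 2)) := Real.sqrt_pos.mpr h2
  constructor
  · positivity
  · have hlt : γ + 1 / (1 + (2 * k₀) ^ 2) < γ + 1 / (1 + k₀ ^ 2) := by
      have : 1 / (1 + (2 * k₀) ^ 2) < 1 / (1 + k₀ ^ 2) := by
        apply one_div_lt_one_div_of_lt (by positivity)
        nlinarith
      linarith
    have := Real.sqrt_lt_sqrt h2.le hlt
    nlinarith
end

section
/- For γ > 1 and any integer j ≥ 2 and k₀ > 0, one has j·ω(k₀) − ω(j·k₀) ≠ 0 and j·ω(k₀) + ω(j·k₀) ≠ 0, where ω(k) = k·√(γ + 1/(1+k²)). -/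
/-- For `γ > 1`, any integer `j ≥ 2` and `k₀ > 0`, one has
`j·ω(k₀) − ω(j·k₀) ≠ 0` and `j·ω(k₀) + ω(j·k₀) ≠ 0`,
where `ω(k) = k·√(γ + 1/(1+k²))`. -/
theorem stmt2 (γ k₀ : ℝ) (hγ : 1 < γ) (hk₀ : 0 < k₀) (j : ℕ) (hj : 2 ≤ j) :
    (j : ℝ) * (k₀ * Real.sqrt (γ + 1 / (1 + k₀ ^ 2))) -
        ((j : ℝ) * k₀) * Real.sqrt (γ + 1 / (1 + ((j : ℝ) * k₀) ^ 2)) ≠ 0 ∧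
    (j : ℝ) * (k₀ * Real.sqrt (γ + 1 / (1 + k₀ ^ 2))) +
        ((j : ℝ) * k₀) * Real.sqrt (γ + 1 / (1 + ((j : ℝ) * k₀) ^ 2)) ≠ 0 := by
  have hjR : (2 : ℝ) ≤ (j : ℝ) := by exact_mod_cast hj
  have hjpos : (0 : ℝ) < (j : ℝ) := by linarith
  have hk2 : (0 : ℝ) < 1 + k₀ ^ 2 := by positivity
  have hjk2 : (0 : ℝ) < 1 + ((j : ℝ) * k₀) ^ 2 := by positivity
  have hlt : k₀ ^ 2 < ((j : ℝ) * k₀) ^ 2 := by nlinarith [mul_pos hk₀ hk₀, sq_nonneg ((j : ℝ) - 1)]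
  have harg : γ + 1 / (1 + ((j : ℝ) * k₀) ^ 2) < γ + 1 / (1 + k₀ ^ 2) := by
    have := one_div_lt_one_div_of_lt hk2 (by linarith : 1 + k₀ ^ 2 < 1 + ((j : ℝ) * k₀) ^ 2)
    linarith
  have h2nn : (0 : ℝ) ≤ γ + 1 / (1 + ((j : ℝ) * k₀) ^ 2) := by positivity
  have hsq : Real.sqrt (γ + 1 / (1 + ((j : ℝ) * k₀) ^ 2)) <
      Real.sqrt (γ + 1 / (1 + k₀ ^ 2)) := Real.sqrt_lt_sqrt h2nn harg
  have hs2pos : (0 : ℝ) < Real.sqrt (γ + 1 / (1 + ((j : ℝ) * k₀) ^ 2)) :=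
    Real.sqrt_pos.mpr (by positivity)
  constructor
  · have : ((j : ℝ) * k₀) * Real.sqrt (γ + 1 / (1 + ((j : ℝ) * k₀) ^ 2)) <
        (j : ℝ) * (k₀ * Real.sqrt (γ + 1 / (1 + k₀ ^ 2))) := by
      rw [mul_assoc]
      exact mul_lt_mul_of_pos_left (mul_lt_mul_of_pos_left hsq hk₀) hjpos
    linarith
  · positivity
end

section
/- For γ > 1, the dispersion relation ω(k) = k·√(γ + 1/(1+k²)) is strictly increasing on ℝ. -/
private lemma key7 (γ : ℝ) (hγ : 1 < γ) {x y : ℝ} (hx : 0 ≤ x) (hxy : x < y) :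
    x * Real.sqrt (γ + 1 / (1 + x ^ 2)) < y * Real.sqrt (γ + 1 / (1 + y ^ 2)) := by
  have hγ0 : (0:ℝ) < γ := by linarith
  have hx2 : (0:ℝ) < 1 + x ^ 2 := by positivity
  have hy2 : (0:ℝ) < 1 + y ^ 2 := by positivity
  have hfx : 0 < γ + 1 / (1 + x ^ 2) := add_pos hγ0 (by positivity)
  have hfy : 0 < γ + 1 / (1 + y ^ 2) := add_pos hγ0 (by positivity)
  have hy0 : 0 < y := lt_of_le_of_lt hx hxy
  have h1 : (x * Real.sqrt (γ + 1 / (1 + x ^ 2))) ^ 2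
      < (y * Real.sqrt (γ + 1 / (1 + y ^ 2))) ^ 2 := by
    rw [mul_pow, mul_pow, Real.sq_sqrt hfx.le, Real.sq_sqrt hfy.le]
    have e1 : x ^ 2 * (γ + 1 / (1 + x ^ 2))
        = (γ * x ^ 2 * (1 + x ^ 2) + x ^ 2) / (1 + x ^ 2) := by field_simp
    have e2 : y ^ 2 * (γ + 1 / (1 + y ^ 2))
        = (γ * y ^ 2 * (1 + y ^ 2) + y ^ 2) / (1 + y ^ 2) := by field_simp
    rw [e1, e2, div_lt_div_iff₀ hx2 hy2]
    have hu : x ^ 2 < y ^ 2 := by nlinarith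
    nlinarith [mul_pos hx2 hy2, mul_pos (mul_pos hx2 hy2) (sub_pos.mpr hu),
      mul_pos hγ0 (mul_pos (mul_pos hx2 hy2) (sub_pos.mpr hu))]
  have hnn : 0 ≤ y * Real.sqrt (γ + 1 / (1 + y ^ 2)) :=
    mul_nonneg hy0.le (Real.sqrt_nonneg _)
  exact lt_of_pow_lt_pow_left₀ 2 hnn h1

/-- For `γ > 1`, the dispersion relation `ω(k) = k·√(γ + 1/(1+k²))`
is strictly increasing on `ℝ`. -/
theorem stmt7 (γ : ℝ) (hγ : 1 < γ) :
    StrictMono (fun k : ℝ => k * Real.sqrt (γ + 1 / (1 + k ^ 2))) := by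
  have hγ0 : (0:ℝ) < γ := by linarith
  intro a b hab
  simp only
  rcases le_or_gt 0 a with ha | ha
  · exact key7 γ hγ ha hab
  · rcases lt_or_ge b 0 with hb | hb
    · have := key7 γ hγ (by linarith : (0:ℝ) ≤ -b) (by linarith : -b < -a)
      rw [neg_sq, neg_sq] at this
      linarith
    · have hfa : 0 < γ + 1 / (1 + a ^ 2) := add_pos hγ0 (by positivity)
      have h1 : a * Real.sqrt (γ + 1 / (1 + a ^ 2)) < 0 :=
        mul_neg_of_neg_of_pos ha (Real.sqrt_pos.mpr hfa)
      have h2 : 0 ≤ b * Real.sqrt (γ + 1 / (1 + b ^ 2)) :=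
        mul_nonneg hb (Real.sqrt_nonneg _)
      linarith
end

section
/- For γ > 1 define ω(k) = k·√(γ + 1/(1+k²)). For every k₀ > 0 and δ > 0 small enough, there exists a constant C > 0 such that for all k with |k| ≤ δ and all ℓ with |ℓ − k₀| ≤ δ or |ℓ + k₀| ≤ δ, and all j ∈ {−1, 0, 1}: |−j·ω(k) − ω(k−ℓ) − ω(ℓ)| ≥ C·|k|. -/
/-!
Since `ω` is odd, `-j ω(k) - ω(k - ℓ) - ω(ℓ) = -j ω(k) + (ω(ℓ - k) - ω(ℓ))`. Writing
`ω(x) = x c(x)` with the phase velocity `c(x) = √(γ + 1/(1+x²))`, the group velocity is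
`ω'(x) = (γ + (1+x²)⁻²) / c(x)`, which lies between `γ / √(γ+1)` and `c(x)`. By the mean value
theorem the increment `ω(ℓ - k) - ω(ℓ)` is therefore at least `γ / √(γ+1) · |k|` and, for `ℓ` near
`k₀`, at most `c(k₀/2) |k|`. For `j = ±1` the term `ω(k)` has size at least `c(δ) |k|`, and
`c(δ) > c(k₀/2)` because `c` decreases in `|x|`; this is where `ω'(0) = c(0) ≠ ω'(±k₀)` enters.
The case `ℓ` near `-k₀` is the reflection `(k, ℓ) ↦ (-k, -ℓ)`.
-/

noncomputable section

def phaseVel (γ k : ℝ) : ℝ := Real.sqrt (γ + 1 / (1 + k ^ 2))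

def dispersion (γ k : ℝ) : ℝ := k * phaseVel γ k

def groupVel (γ k : ℝ) : ℝ := (γ + 1 / (1 + k ^ 2) ^ 2) / phaseVel γ k

def phaseMismatch (γ : ℝ) (j : ℤ) (k ℓ : ℝ) : ℝ :=
  -(j : ℝ) * dispersion γ k - dispersion γ (k - ℓ) - dispersion γ ℓ

end

section Dispersion

variable {γ : ℝ}

lemma phaseVel_pos (hγ : 0 ≤ γ) (k : ℝ) : 0 < phaseVel γ k :=
  Real.sqrt_pos.2 (by positivity)

lemma phaseVel_sq (hγ : 0 ≤ γ) (k : ℝ) : phaseVel γ k ^ 2 = γ + 1 / (1 + k ^ 2) :=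
  Real.sq_sqrt (by positivity)

lemma phaseVel_zero : phaseVel γ 0 = √(γ + 1) := by
  simp [phaseVel]

lemma phaseVel_le_phaseVel {k l : ℝ} (h : k ^ 2 ≤ l ^ 2) : phaseVel γ l ≤ phaseVel γ k :=
  Real.sqrt_le_sqrt (by gcongr)

lemma phaseVel_lt_phaseVel (hγ : 0 ≤ γ) {k l : ℝ} (h : k ^ 2 < l ^ 2) :
    phaseVel γ l < phaseVel γ k :=
  Real.sqrt_lt_sqrt (by positivity) (by gcongr)

lemma dispersion_neg (k : ℝ) : dispersion γ (-k) = -dispersion γ k := by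
  simp [dispersion, phaseVel]

lemma hasDerivAt_dispersion (hγ : 0 ≤ γ) (k : ℝ) :
    HasDerivAt (dispersion γ) (groupVel γ k) k := by
  have hq : HasDerivAt (fun x : ℝ => γ + 1 / (1 + x ^ 2)) (-(2 * k) / (1 + k ^ 2) ^ 2) k := by
    simpa [one_div] using
      (((hasDerivAt_pow 2 k).const_add 1).inv (by positivity : 1 + k ^ 2 ≠ 0)).const_add γ
  refine ((hasDerivAt_id' k).mul (hq.sqrt (by positivity))).congr_deriv ?_
  change 1 * phaseVel γ k + k * (-(2 * k) / (1 + k ^ 2) ^ 2 / (2 * phaseVel γ k)) = groupVel γ k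
  have hc := (phaseVel_pos hγ k).ne'
  have hc2 := phaseVel_sq hγ k
  rw [groupVel]
  field_simp
  linear_combination (norm := (field_simp; ring)) (1 + k ^ 2) ^ 2 * hc2

lemma groupVel_le_phaseVel (hγ : 0 ≤ γ) (k : ℝ) : groupVel γ k ≤ phaseVel γ k := by
  have h1 : 1 / (1 + k ^ 2) ^ 2 ≤ 1 / (1 + k ^ 2) :=
    one_div_le_one_div_of_le (by positivity) (by nlinarith [sq_nonneg k])
  rw [groupVel, div_le_iff₀ (phaseVel_pos hγ k), ← sq, phaseVel_sq hγ]
  linarith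

lemma div_sqrt_le_groupVel (hγ : 0 ≤ γ) (k : ℝ) : γ / √(γ + 1) ≤ groupVel γ k :=
  calc γ / √(γ + 1) ≤ γ / phaseVel γ k :=
        div_le_div_of_nonneg_left hγ (phaseVel_pos hγ k)
          (phaseVel_zero (γ := γ) ▸ phaseVel_le_phaseVel (by simpa using sq_nonneg k))
    _ ≤ groupVel γ k :=
        div_le_div_of_nonneg_right (le_add_of_nonneg_right (by positivity)) (phaseVel_pos hγ k).le

lemma abs_dispersion_sub_le (hγ : 0 ≤ γ) {a x y : ℝ} (ha : 0 ≤ a) (hx : a ≤ x) (hy : a ≤ y) :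
    |dispersion γ y - dispersion γ x| ≤ phaseVel γ a * |y - x| := by
  refine (convex_Ici a).norm_image_sub_le_of_norm_hasDerivWithin_le
    (fun z _ => (hasDerivAt_dispersion hγ z).hasDerivWithinAt) (fun z hz => ?_) hx hy
  have hz2 : a ^ 2 ≤ z ^ 2 := pow_le_pow_left₀ ha hz 2
  rw [Real.norm_eq_abs, abs_of_nonneg ((by positivity : 0 ≤ γ / √(γ + 1)).trans
    (div_sqrt_le_groupVel hγ z))]
  exact (groupVel_le_phaseVel hγ z).trans (phaseVel_le_phaseVel hz2)

lemma mul_abs_sub_le_abs_dispersion_sub (hγ : 0 ≤ γ) (x y : ℝ) :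
    γ / √(γ + 1) * |y - x| ≤ |dispersion γ y - dispersion γ x| := by
  have hmono : ∀ {x y : ℝ}, x ≤ y → γ / √(γ + 1) * (y - x) ≤ dispersion γ y - dispersion γ x :=
    fun hxy => mul_sub_le_image_sub_of_le_deriv
      (fun z => (hasDerivAt_dispersion hγ z).differentiableAt)
      (fun z => (hasDerivAt_dispersion hγ z).deriv ▸ div_sqrt_le_groupVel hγ z) hxy
  rcases le_total x y with hxy | hyx
  · rw [abs_of_nonneg (sub_nonneg.2 hxy)]
    exact (hmono hxy).trans (le_abs_self _)
  · rw [abs_sub_comm y, abs_sub_comm (dispersion γ y), abs_of_nonneg (sub_nonneg.2 hyx)]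
    exact (hmono hyx).trans (le_abs_self _)

lemma mul_abs_le_abs_dispersion {k δ : ℝ} (hk : |k| ≤ δ) :
    phaseVel γ δ * |k| ≤ |dispersion γ k| := by
  have hk2 : k ^ 2 ≤ δ ^ 2 := sq_le_sq' (abs_le.1 hk).1 (abs_le.1 hk).2
  rw [dispersion, abs_mul, abs_of_nonneg (show 0 ≤ phaseVel γ k from Real.sqrt_nonneg _), mul_comm]
  exact mul_le_mul_of_nonneg_left (phaseVel_le_phaseVel hk2) (abs_nonneg k)

lemma phaseMismatch_eq (j : ℤ) (k ℓ : ℝ) :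
    phaseMismatch γ j k ℓ = -(j : ℝ) * dispersion γ k + (dispersion γ (ℓ - k) - dispersion γ ℓ) := by
  rw [phaseMismatch, ← neg_sub ℓ k, dispersion_neg]
  ring

lemma phaseMismatch_neg_neg (j : ℤ) (k ℓ : ℝ) :
    phaseMismatch γ j (-k) (-ℓ) = -phaseMismatch γ j k ℓ := by
  simp only [phaseMismatch, ← neg_sub', dispersion_neg]
  ring

end Dispersion

lemma min_mul_le_abs_neg_mul_add {j : ℤ} (hj : j = -1 ∨ j = 0 ∨ j = 1) {m p L t a D : ℝ}
    (ht : 0 ≤ t) (hD : m * t ≤ |D|) (hDL : |D| ≤ L * t) (ha : p * t ≤ |a|) :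
    min m (p - L) * t ≤ |-(j : ℝ) * a + D| := by
  have hm : min m (p - L) * t ≤ m * t := mul_le_mul_of_nonneg_right (min_le_left _ _) ht
  have hp : min m (p - L) * t ≤ (p - L) * t := mul_le_mul_of_nonneg_right (min_le_right _ _) ht
  rcases hj with rfl | rfl | rfl
  · have := abs_sub_abs_le_abs_sub a (-D)
    simp only [abs_neg, sub_neg_eq_add] at this
    simp only [Int.cast_neg, Int.cast_one, neg_neg, one_mul]
    linarith
  · simp only [Int.cast_zero, neg_zero, zero_mul, zero_add]
    linarith
  · have := abs_sub_abs_le_abs_sub (-a) (-D)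
    simp only [abs_neg, sub_neg_eq_add] at this
    simp only [Int.cast_one, one_mul, neg_mul]
    linarith

lemma min_mul_abs_le_abs_phaseMismatch {γ k₀ δ k ℓ : ℝ} {j : ℤ} (hγ : 0 ≤ γ)
    (hδ : δ ≤ k₀ / 4) (hk : |k| ≤ δ) (hℓ : |ℓ - k₀| ≤ δ) (hj : j = -1 ∨ j = 0 ∨ j = 1) :
    min (γ / √(γ + 1)) (phaseVel γ δ - phaseVel γ (k₀ / 2)) * |k| ≤
      |phaseMismatch γ j k ℓ| := by
  obtain ⟨hk₁, hk₂⟩ := abs_le.1 hk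
  obtain ⟨hℓ₁, hℓ₂⟩ := abs_le.1 hℓ
  have hincr := mul_abs_sub_le_abs_dispersion_sub hγ ℓ (ℓ - k)
  have hincr' := abs_dispersion_sub_le hγ (a := k₀ / 2) (x := ℓ) (y := ℓ - k)
    (by linarith) (by linarith) (by linarith)
  rw [sub_sub_cancel_left, abs_neg] at hincr hincr'
  rw [phaseMismatch_eq]
  exact min_mul_le_abs_neg_mul_add hj (abs_nonneg k) hincr hincr' (mul_abs_le_abs_dispersion hk)

/-- Lower bound (5.6): for `γ > 1`, `ω(k) = k·√(γ + 1/(1+k²))`, every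
`k₀ > 0` and all small enough `δ > 0`, there is `C > 0` such that for
`|k| ≤ δ`, `ℓ` within `δ` of `±k₀` and `j ∈ {−1,0,1}`:
`|−j·ω(k) − ω(k−ℓ) − ω(ℓ)| ≥ C·|k|`. -/
theorem stmt16 (γ : ℝ) (hγ : 1 < γ) (k₀ : ℝ) (hk₀ : 0 < k₀) :
    ∃ δ₀ > (0:ℝ), ∀ δ : ℝ, 0 < δ → δ ≤ δ₀ → ∃ C > (0:ℝ),
      ∀ k ℓ : ℝ, |k| ≤ δ → (|ℓ - k₀| ≤ δ ∨ |ℓ + k₀| ≤ δ) →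
        ∀ j : ℤ, (j = -1 ∨ j = 0 ∨ j = 1) →
          C * |k| ≤
            |(-(j : ℝ)) * (k * Real.sqrt (γ + 1 / (1 + k ^ 2))) -
              (k - ℓ) * Real.sqrt (γ + 1 / (1 + (k - ℓ) ^ 2)) -
              ℓ * Real.sqrt (γ + 1 / (1 + ℓ ^ 2))| := by
  have hγ₀ : 0 ≤ γ := by linarith
  refine ⟨k₀ / 4, by positivity, fun δ hδ hδk₀ => ?_⟩
  have hgap : phaseVel γ (k₀ / 2) < phaseVel γ δ := phaseVel_lt_phaseVel hγ₀ (by nlinarith)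
  refine ⟨min (γ / √(γ + 1)) (phaseVel γ δ - phaseVel γ (k₀ / 2)), lt_min (by positivity) (sub_pos.2 hgap), fun k ℓ hk hℓ j hj => ?_⟩
  change _ ≤ |phaseMismatch γ j k ℓ|
  rcases hℓ with hℓ | hℓ
  · exact min_mul_abs_le_abs_phaseMismatch hγ₀ hδk₀ hk hℓ hj
  · have hneg := min_mul_abs_le_abs_phaseMismatch (k := -k) (ℓ := -ℓ) hγ₀ hδk₀
      (by rwa [abs_neg]) (by rwa [← neg_add', abs_neg]) hj
    rwa [phaseMismatch_neg_neg, abs_neg, abs_neg] at hneg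
end

section
/- Let γ > 1, q̂(k) = √(γ + 1/(1+k²)) and s(k,ℓ) = (1/(k−ℓ))·(k·q̂(k)²/q̂(ℓ)² − ℓ·q̂(ℓ)²/q̂(k)²) for k ≠ ℓ. Then s extends continuously to k = ℓ and s(k,ℓ) → 1 as |k| → ∞ with |ℓ| → ∞ and |k − ℓ| bounded; more precisely |s(k,ℓ) − 1| ≤ C(M)·(1+k²)⁻¹ whenever |k − ℓ| ≤ M and |k| ≥ 2M + 1. -/
set_option maxHeartbeats 1000000

/-- Key polynomial estimate in variables `u = 1+k²`, `v = 1+ℓ²`, `p = kℓ`. -/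
lemma stmt17_aux (γ u v p : ℝ) (hγ : 1 < γ) (hu : 1 ≤ u) (hv : 1 ≤ v)
    (huv : u ≤ 4*v) (hvu : v ≤ 4*u) (hp1 : 2*p ≤ u+v) (hp2 : -(u+v) ≤ 2*p) :
    |2*γ*u*v - 2*γ*p*u*v - γ*u^2*v - γ*u*v^2 - u*v + 1 - p*(u+v) - p^2|
      ≤ 100*γ*(u*v^2) := by
  have hγ0 : 0 < γ := by linarith
  have hu0 : 0 < u := by linarith
  have hv0 : 0 < v := by linarith
  rw [abs_le]
  constructor
  · nlinarith [mul_pos hu0 hv0, mul_nonneg (mul_nonneg hu0.le hv0.le) hv0.le,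
      sq_nonneg (2*p - (u+v)), sq_nonneg (2*p + (u+v)), sq_nonneg p,
      mul_pos (mul_pos hγ0 hu0) hv0, mul_nonneg (mul_nonneg hγ0.le hu0.le) (sq_nonneg v),
      mul_le_mul_of_nonneg_left hvu (mul_pos hγ0 (mul_pos hu0 hv0)).le,
      mul_le_mul_of_nonneg_left huv (mul_pos hγ0 (mul_pos hu0 hv0)).le]
  · nlinarith [mul_pos hu0 hv0, mul_nonneg (mul_nonneg hu0.le hv0.le) hv0.le,
      sq_nonneg (2*p - (u+v)), sq_nonneg (2*p + (u+v)), sq_nonneg p,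
      mul_pos (mul_pos hγ0 hu0) hv0, mul_nonneg (mul_nonneg hγ0.le hu0.le) (sq_nonneg v),
      mul_le_mul_of_nonneg_left hvu (mul_pos hγ0 (mul_pos hu0 hv0)).le,
      mul_le_mul_of_nonneg_left huv (mul_pos hγ0 (mul_pos hu0 hv0)).le]

/-- Let `γ > 1`, `q̂(k) = √(γ + 1/(1+k²))` and
`s(k,ℓ) = (1/(k−ℓ))·(k·q̂(k)²/q̂(ℓ)² − ℓ·q̂(ℓ)²/q̂(k)²)` for `k ≠ ℓ`.
Then `s` extends continuously to `k = ℓ`, and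
`|s(k,ℓ) − 1| ≤ C(M)·(1+k²)⁻¹` whenever `|k−ℓ| ≤ M` and `|k| ≥ 2M+1`. -/
theorem stmt17 (γ : ℝ) (hγ : 1 < γ) :
    ∃ sbar : ℝ → ℝ → ℝ,
      Continuous (fun x : ℝ × ℝ => sbar x.1 x.2) ∧
      (∀ k ℓ : ℝ, k ≠ ℓ →
        sbar k ℓ = (1 / (k - ℓ)) *
          (k * (Real.sqrt (γ + 1 / (1 + k ^ 2))) ^ 2 /
              (Real.sqrt (γ + 1 / (1 + ℓ ^ 2))) ^ 2 -
           ℓ * (Real.sqrt (γ + 1 / (1 + ℓ ^ 2))) ^ 2 /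
              (Real.sqrt (γ + 1 / (1 + k ^ 2))) ^ 2)) ∧
      (∀ M > (0:ℝ), ∃ C > (0:ℝ), ∀ k ℓ : ℝ, |k - ℓ| ≤ M → 2 * M + 1 ≤ |k| →
        |sbar k ℓ - 1| ≤ C / (1 + k ^ 2)) := by
  have hγ0 : 0 < γ := by linarith
  refine ⟨fun k ℓ =>
    (γ^2*(1+k^2)^2*(1+ℓ^2)^2 + 2*γ*(1-k*ℓ)*((1+k^2)*(1+ℓ^2))
      + (1 - 2*(k*ℓ) - k*ℓ*(k^2 + k*ℓ + ℓ^2))) /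
    ((γ*(1+k^2)+1) * (γ*(1+ℓ^2)+1) * ((1+k^2)*(1+ℓ^2))), ?_, ?_, ?_⟩
  · apply Continuous.div
    · fun_prop
    · fun_prop
    · intro x
      have h1 : (0:ℝ) < 1 + x.1^2 := by positivity
      have h2 : (0:ℝ) < 1 + x.2^2 := by positivity
      have ha : 0 < γ*(1+x.1^2)+1 := by nlinarith
      have hb : 0 < γ*(1+x.2^2)+1 := by nlinarith
      exact ne_of_gt (mul_pos (mul_pos ha hb) (mul_pos h1 h2))
  · intro k ℓ hkl
    have h1 : (0:ℝ) < 1 + k^2 := by positivity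
    have h2 : (0:ℝ) < 1 + ℓ^2 := by positivity
    have ha : (0:ℝ) < γ + 1/(1+k^2) := by positivity
    have hb : (0:ℝ) < γ + 1/(1+ℓ^2) := by positivity
    rw [Real.sq_sqrt ha.le, Real.sq_sqrt hb.le]
    have hA : γ*(1+k^2)+1 ≠ 0 := by nlinarith
    have hB : γ*(1+ℓ^2)+1 ≠ 0 := by nlinarith
    have hd : k - ℓ ≠ 0 := sub_ne_zero.mpr hkl
    field_simp
    ring
  · intro M hM
    refine ⟨100*γ, by positivity, ?_⟩
    intro k ℓ hkℓ hk
    have h1 : (0:ℝ) < 1 + k^2 := by positivity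
    have h2 : (0:ℝ) < 1 + ℓ^2 := by positivity
    have habs : |(|k| - |ℓ|)| ≤ M := le_trans (abs_abs_sub_abs_le_abs_sub k ℓ) hkℓ
    have hk0 : 0 ≤ |k| := abs_nonneg k
    have hl0 : 0 ≤ |ℓ| := abs_nonneg ℓ
    have hkk : |k|^2 = k^2 := sq_abs k
    have hll : |ℓ|^2 = ℓ^2 := sq_abs ℓ
    have habs1 : |k| - |ℓ| ≤ M := le_trans (le_abs_self _) habs
    have habs2 : |ℓ| - |k| ≤ M := by
      have := neg_le_of_abs_le habs; linarith
    have huv : (1+k^2) ≤ 4*(1+ℓ^2) := by nlinarith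
    have hvu : (1+ℓ^2) ≤ 4*(1+k^2) := by nlinarith
    have hp1 : 2*(k*ℓ) ≤ (1+k^2)+(1+ℓ^2) := by nlinarith [sq_nonneg (k-ℓ)]
    have hp2 : -((1+k^2)+(1+ℓ^2)) ≤ 2*(k*ℓ) := by nlinarith [sq_nonneg (k+ℓ)]
    have ha : 0 < γ*(1+k^2)+1 := by nlinarith
    have hb : 0 < γ*(1+ℓ^2)+1 := by nlinarith
    have hD : 0 < (γ*(1+k^2)+1) * (γ*(1+ℓ^2)+1) * ((1+k^2)*(1+ℓ^2)) :=
      mul_pos (mul_pos ha hb) (mul_pos h1 h2)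
    have key : (γ^2*(1+k^2)^2*(1+ℓ^2)^2 + 2*γ*(1-k*ℓ)*((1+k^2)*(1+ℓ^2))
        + (1 - 2*(k*ℓ) - k*ℓ*(k^2 + k*ℓ + ℓ^2))) /
        ((γ*(1+k^2)+1) * (γ*(1+ℓ^2)+1) * ((1+k^2)*(1+ℓ^2))) - 1 =
        (2*γ*(1+k^2)*(1+ℓ^2) - 2*γ*(k*ℓ)*(1+k^2)*(1+ℓ^2) - γ*(1+k^2)^2*(1+ℓ^2)
          - γ*(1+k^2)*(1+ℓ^2)^2 - (1+k^2)*(1+ℓ^2) + 1 - (k*ℓ)*((1+k^2)+(1+ℓ^2))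
          - (k*ℓ)^2) /
        ((γ*(1+k^2)+1) * (γ*(1+ℓ^2)+1) * ((1+k^2)*(1+ℓ^2))) := by
      field_simp
      ring
    rw [key, abs_div, abs_of_pos hD]
    have hE := stmt17_aux γ (1+k^2) (1+ℓ^2) (k*ℓ) hγ (by linarith [sq_nonneg k]) (by linarith [sq_nonneg ℓ])
      huv hvu hp1 hp2
    have hDge : (1+k^2)^2*(1+ℓ^2)^2 ≤
        (γ*(1+k^2)+1) * (γ*(1+ℓ^2)+1) * ((1+k^2)*(1+ℓ^2)) := by
      have e1 : (1+k^2) ≤ γ*(1+k^2)+1 := by nlinarith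
      have e2 : (1+ℓ^2) ≤ γ*(1+ℓ^2)+1 := by nlinarith
      have e3 : (1+k^2)*(1+ℓ^2) ≤ (γ*(1+k^2)+1)*(γ*(1+ℓ^2)+1) :=
        mul_le_mul e1 e2 h2.le (by nlinarith)
      have e4 := mul_le_mul_of_nonneg_right e3 (mul_pos h1 h2).le
      linarith [e4]
    calc |2*γ*(1+k^2)*(1+ℓ^2) - 2*γ*(k*ℓ)*(1+k^2)*(1+ℓ^2) - γ*(1+k^2)^2*(1+ℓ^2)
          - γ*(1+k^2)*(1+ℓ^2)^2 - (1+k^2)*(1+ℓ^2) + 1 - (k*ℓ)*((1+k^2)+(1+ℓ^2))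
          - (k*ℓ)^2| /
        ((γ*(1+k^2)+1) * (γ*(1+ℓ^2)+1) * ((1+k^2)*(1+ℓ^2)))
        ≤ (100*γ*((1+k^2)*(1+ℓ^2)^2)) / ((1+k^2)^2*(1+ℓ^2)^2) := by
          apply div_le_div₀ (by positivity) hE (by positivity) hDge
      _ = 100*γ / (1+k^2) := by field_simp
end
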